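/- arXiv:1403.6521 — 4 statements merged into one kernel-verified Lean document; each statement's English description precedes it below -/
import Mathlib

section
/- Let q ≥ 2 be a prime power, m ≥ 0, and α = (α_1,…,α_ℓ) a composition of n with partial sums A_i (A_0 = 0), and let L be the largest index 0 ≤ L ≤ ℓ with A_L ≤ m. Define α̂ := α if L = ℓ, and α̂ := (α_1,…,α_L, m−A_L, 0,…,0) if L < ℓ; for 1 ≤ k ≤ L define α̂^{(k)} := (α_1,…,α_{k−1}, α_k−1, α_{k+1},…,α_ℓ) if L = ℓ and α̂^{(k)} := (α_1,…,α_{k−1}, α_k−1, α_{k+1},…,α_L, m−A_L+1, 0,…,0) if L < ℓ. Then the weak compositions β with 0 ≤ β ≤ α componentwise and |β| ≤ m satisfying e(m,α,β) < q^m are exactly β = α̂ and β = α̂^{(k)} for k = 1,…,L; moreover e(m,α,α̂) = 0 and e(m,α,α̂^{(k)}) = q^m − q^{A_k−1}. -/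
open Finset

/-- Partial sums: `psum f i = f 0 + f 1 + ⋯ + f (i-1)`. -/
def psum (f : ℕ → ℕ) (i : ℕ) : ℕ := ∑ j ∈ Finset.range i, f j

/-- The exponent `e(m,α,β) = Σᵢ (αᵢ − βᵢ)(q^m − q^{Bᵢ})`. -/
def eexp (q m ℓ : ℕ) (α β : ℕ → ℕ) : ℕ :=
  ∑ i ∈ Finset.range ℓ, (α i - β i) * (q ^ m - q ^ psum β (i + 1))

/-- The weak composition `α̂`: equal to `α` if `L = ℓ`, and to
`(α_0, …, α_{L-1}, m − A_L, 0, …, 0)` if `L < ℓ`. -/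
def alphaHat (m ℓ L : ℕ) (α : ℕ → ℕ) : ℕ → ℕ :=
  if L = ℓ then α
  else fun i => if i < L then α i else if i = L then m - psum α L else 0

/-- The weak composition `α̂⁽ᵏ⁾` (for `0 ≤ k < L`): obtained from `α` by decreasing the `k`-th
entry by one if `L = ℓ`, and equal to
`(α_0, …, α_{k-1}, α_k − 1, α_{k+1}, …, α_{L-1}, m − A_L + 1, 0, …, 0)` if `L < ℓ`. -/
def alphaHatK (m ℓ L : ℕ) (α : ℕ → ℕ) (k : ℕ) : ℕ → ℕ :=
  if L = ℓ then Function.update α k (α k - 1)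
  else fun i =>
    if i < L then (if i = k then α i - 1 else α i)
    else if i = L then m - psum α L + 1 else 0

/-!
An index `i` with `β i < α i` contributes nothing to `e(m,α,β)` when `B_{i+1} = m`, and at least
`(α_i - β_i)(q^m - q^{m-1})` otherwise; since `2 (q^m - q^{m-1}) ≥ q^m`, the bound `e < q^m`
allows at most one index of the second kind, with `α_k - β_k = 1`. Call `β` saturated below `α`
if it has no such index. A saturated `β ≤ α` with `|β| ≤ m` has partial sums `min (A_j, m)`,
hence is `α̂`; in the exceptional case `β` is saturated below `α` with `α_k` lowered by one, and
`α̂⁽ᵏ⁾` is the `α̂` of that composition.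
-/

open Function

section PartialSums

variable {f g : ℕ → ℕ}

lemma psum_succ (f : ℕ → ℕ) (i : ℕ) : psum f (i + 1) = psum f i + f i :=
  sum_range_succ f i

lemma psum_mono (f : ℕ → ℕ) {a b : ℕ} (h : a ≤ b) : psum f a ≤ psum f b :=
  sum_le_sum_of_subset (range_subset_range.2 h)

lemma psum_congr {j : ℕ} (h : ∀ i < j, f i = g i) : psum f j = psum g j :=
  sum_congr rfl fun i hi => h i (mem_range.1 hi)

lemma eq_of_psum_eq {ℓ : ℕ} (h : ∀ j ≤ ℓ, psum f j = psum g j) : ∀ i < ℓ, f i = g i := by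
  intro i hi
  have := h (i + 1) hi
  rw [psum_succ, psum_succ, h i hi.le] at this
  omega

lemma psum_update_add_of_lt {k j : ℕ} (x : ℕ) (hkj : k < j) :
    psum (update f k x) j + f k = psum f j + x := by
  have hk : k ∈ range j := mem_range.2 hkj
  rw [psum, psum, sum_update_of_mem hk, sdiff_singleton_eq_erase, ← add_sum_erase _ _ hk]
  ring

end PartialSums

def Saturated (m ℓ : ℕ) (α β : ℕ → ℕ) : Prop :=
  ∀ i < ℓ, β i < α i → psum β (i + 1) = m

section Saturated

variable {m ℓ : ℕ} {α β : ℕ → ℕ}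

lemma Saturated.psum_eq_min (h : Saturated m ℓ α β) (hb : ∀ i < ℓ, β i ≤ α i)
    (hm : psum β ℓ ≤ m) : ∀ j ≤ ℓ, psum β j = min (psum α j) m := by
  intro j hj
  induction j with
  | zero => simp [psum]
  | succ j ih =>
    have ih := ih (by omega)
    have hβ := psum_mono β hj
    have hbj := hb j (by omega)
    have hsat := h j (by omega)
    rw [psum_succ] at hβ hsat ⊢
    rw [psum_succ]
    omega

lemma saturated_of_psum_eq_min (h : ∀ j ≤ ℓ, psum β j = min (psum α j) m) :
    Saturated m ℓ α β := by
  intro i hi hlt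
  have h1 := h (i + 1) hi
  have h0 := h i hi.le
  rw [psum_succ, psum_succ] at h1
  rw [psum_succ]
  omega

lemma eexp_term_eq_zero (q : ℕ) {i : ℕ} (h : β i < α i → psum β (i + 1) = m) :
    (α i - β i) * (q ^ m - q ^ psum β (i + 1)) = 0 := by
  by_cases hlt : β i < α i
  · simp [h hlt]
  · simp [Nat.sub_eq_zero_of_le (not_lt.1 hlt)]

lemma Saturated.eexp_eq_zero (q : ℕ) (h : Saturated m ℓ α β) : eexp q m ℓ α β = 0 :=
  sum_eq_zero fun i hi => eexp_term_eq_zero q (h i (mem_range.1 hi))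

lemma Saturated.eexp_eq_of_update {k : ℕ} (q : ℕ) (hk : k < ℓ)
    (h : Saturated m ℓ (update α k (β k)) β) :
    eexp q m ℓ α β = (α k - β k) * (q ^ m - q ^ psum β (k + 1)) := by
  refine sum_eq_single_of_mem k (mem_range.2 hk) fun i hi hik => eexp_term_eq_zero q ?_
  simpa [update_of_ne hik] using h i (mem_range.1 hi)

end Saturated

lemma pow_le_two_mul_sub_pow_pred {q m : ℕ} (hq : 2 ≤ q) (hm : m ≠ 0) :
    q ^ m ≤ 2 * (q ^ m - q ^ (m - 1)) := by
  have : q ^ m = q ^ (m - 1) * q := by rw [← pow_succ]; congr 1; omega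
  rw [this]
  have := Nat.mul_le_mul_left (q ^ (m - 1)) hq
  omega

lemma saturated_or_of_eexp_lt {q m ℓ : ℕ} {α β : ℕ → ℕ} (hq : 2 ≤ q)
    (hm : psum β ℓ ≤ m) (he : eexp q m ℓ α β < q ^ m) :
    Saturated m ℓ α β ∨
      ∃ k < ℓ, β k + 1 = α k ∧ psum β (k + 1) < m ∧ Saturated m ℓ (update α k (β k)) β := by
  set term : ℕ → ℕ := fun i => (α i - β i) * (q ^ m - q ^ psum β (i + 1))
  by_cases hsat : Saturated m ℓ α β
  · exact Or.inl hsat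
  obtain ⟨k, hkℓ, hkβ, hkm⟩ : ∃ k < ℓ, β k < α k ∧ psum β (k + 1) ≠ m := by
    simpa [Saturated] using hsat
  have hlt_of_ne : ∀ i < ℓ, psum β (i + 1) ≠ m → psum β (i + 1) < m := fun i hi hne =>
    lt_of_le_of_ne ((psum_mono β (by omega)).trans hm) hne
  have hk_lt := hlt_of_ne k hkℓ hkm
  have hq_half := pow_le_two_mul_sub_pow_pred (m := m) hq (by omega)
  have hcost : ∀ i, psum β (i + 1) < m → (α i - β i) * (q ^ m - q ^ (m - 1)) ≤ term i :=
    fun i hi => Nat.mul_le_mul_left _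
      (Nat.sub_le_sub_left (Nat.pow_le_pow_right (by omega) (by omega)) _)
  have hk_cost := hcost k hk_lt
  refine Or.inr ⟨k, hkℓ, ?_, hk_lt, ?_⟩
  · have : term k ≤ eexp q m ℓ α β :=
      single_le_sum (f := term) (fun _ _ => Nat.zero_le _) (mem_range.2 hkℓ)
    by_contra hne
    have : 2 * (q ^ m - q ^ (m - 1)) ≤ (α k - β k) * (q ^ m - q ^ (m - 1)) :=
      Nat.mul_le_mul_right _ (by omega)
    omega
  · intro i hi hlt
    rcases eq_or_ne i k with rfl | hik
    · simp at hlt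
    rw [update_of_ne hik] at hlt
    by_contra hne
    have hpair : term i + term k ≤ eexp q m ℓ α β := by
      have h := sum_le_sum_of_subset (f := term)
        (show ({i, k} : Finset ℕ) ⊆ range ℓ by
          simp [insert_subset_iff, mem_range, hi, hkℓ])
      rwa [sum_pair hik] at h
    have := hcost i (hlt_of_ne i hi hne)
    have : q ^ m - q ^ (m - 1) ≤ (α i - β i) * (q ^ m - q ^ (m - 1)) :=
      Nat.le_mul_of_pos_left _ (by omega)
    have : q ^ m - q ^ (m - 1) ≤ (α k - β k) * (q ^ m - q ^ (m - 1)) :=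
      Nat.le_mul_of_pos_left _ (by omega)
    omega

section AlphaHat

variable {m ℓ L : ℕ} {α : ℕ → ℕ}

lemma alphaHat_of_lt {i : ℕ} (hi : i < L) : alphaHat m ℓ L α i = α i := by
  unfold alphaHat; split_ifs <;> simp [hi]

lemma psum_alphaHat (hLle : L ≤ ℓ) (hLA : psum α L ≤ m)
    (hLmax : L < ℓ → m ≤ psum α (L + 1)) :
    ∀ j ≤ ℓ, psum (alphaHat m ℓ L α) j = min (psum α j) m := by
  by_cases hLℓ : L = ℓ
  · subst hLℓ
    intro j hj
    simp only [alphaHat, if_true]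
    have := psum_mono α hj
    omega
  have hLmax := hLmax (by omega)
  intro j _
  induction j with
  | zero => simp [psum]
  | succ j ih =>
    rw [psum_succ, psum_succ, ih (by omega)]
    simp only [alphaHat, if_neg hLℓ]
    rcases lt_trichotomy j L with h | rfl | h
    · have := psum_mono α (show j + 1 ≤ L by omega)
      rw [psum_succ] at this
      simp only [if_pos h]
      omega
    · rw [psum_succ] at hLmax
      simp only [lt_irrefl, if_false, if_true]
      omega
    · have := psum_mono α (show L + 1 ≤ j by omega)
      simp only [if_neg (show ¬ j < L by omega), if_neg (show j ≠ L by omega)]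
      omega

lemma alphaHatK_eq_alphaHat {k : ℕ} (hkL : k < L) (hαk : 0 < α k) (hLA : psum α L ≤ m) :
    alphaHatK m ℓ L α k = alphaHat m ℓ L (update α k (α k - 1)) := by
  unfold alphaHatK alphaHat
  split_ifs with hLℓ
  · rfl
  funext i
  have := psum_update_add_of_lt (f := α) (α k - 1) hkL
  rcases eq_or_ne i k with rfl | hik
  · simp [hkL]
  · simp only [update_of_ne hik, if_neg hik]
    split_ifs <;> omega

lemma psum_update_pred_cutoff {k : ℕ} (hkL : k < L) (hαk : 0 < α k) (hLA : psum α L ≤ m)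
    (hLmax : L < ℓ → m < psum α (L + 1)) :
    psum (update α k (α k - 1)) L ≤ m ∧
      (L < ℓ → m ≤ psum (update α k (α k - 1)) (L + 1)) := by
  have h1 := psum_update_add_of_lt (f := α) (α k - 1) hkL
  have h2 := psum_update_add_of_lt (f := α) (α k - 1) (show k < L + 1 by omega)
  exact ⟨by omega, fun hL => by have := hLmax hL; omega⟩

end AlphaHat

section Exponent

variable {q m ℓ L : ℕ} {α : ℕ → ℕ}

lemma eexp_congr {β β' : ℕ → ℕ} (h : ∀ i < ℓ, β i = β' i) :
    eexp q m ℓ α β = eexp q m ℓ α β' := by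
  refine sum_congr rfl fun i hi => ?_
  have hi := mem_range.1 hi
  rw [h i hi, psum_congr fun j hj => h j (by omega)]

lemma eexp_alphaHat (hLle : L ≤ ℓ) (hLA : psum α L ≤ m) (hLmax : L < ℓ → m ≤ psum α (L + 1)) :
    eexp q m ℓ α (alphaHat m ℓ L α) = 0 :=
  (saturated_of_psum_eq_min (psum_alphaHat hLle hLA hLmax)).eexp_eq_zero q

lemma eexp_alphaHatK {k : ℕ} (hαk : 0 < α k) (hLle : L ≤ ℓ) (hLA : psum α L ≤ m)
    (hLmax : L < ℓ → m < psum α (L + 1)) (hkL : k < L) :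
    eexp q m ℓ α (alphaHatK m ℓ L α k) = q ^ m - q ^ (psum α (k + 1) - 1) := by
  obtain ⟨hLA', hLmax'⟩ := psum_update_pred_cutoff hkL hαk hLA hLmax
  have hpsum := psum_alphaHat hLle hLA' hLmax'
  rw [alphaHatK_eq_alphaHat hkL hαk hLA]
  set γ := alphaHat m ℓ L (update α k (α k - 1)) with hγ
  have hk : γ k = α k - 1 := by rw [hγ, alphaHat_of_lt hkL, update_self]
  have hsat : Saturated m ℓ (update α k (γ k)) γ := by
    rw [hk]
    exact saturated_of_psum_eq_min hpsum
  have hpsum_k : psum γ (k + 1) = psum α (k + 1) - 1 := by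
    have := psum_update_add_of_lt (f := α) (α k - 1) k.lt_add_one
    have := psum_mono α (show k + 1 ≤ L by omega)
    rw [hpsum (k + 1) (by omega)]
    omega
  rw [hsat.eexp_eq_of_update q (by omega), hk, hpsum_k, show α k - (α k - 1) = 1 by omega,
    one_mul]

lemma eq_alphaHat_of_saturated {β : ℕ → ℕ} (hLle : L ≤ ℓ) (hLA : psum α L ≤ m)
    (hLmax : L < ℓ → m ≤ psum α (L + 1)) (hb : ∀ i < ℓ, β i ≤ α i) (hm : psum β ℓ ≤ m)
    (h : Saturated m ℓ α β) : ∀ i < ℓ, β i = alphaHat m ℓ L α i :=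
  eq_of_psum_eq fun j hj =>
    (h.psum_eq_min hb hm j hj).trans (psum_alphaHat hLle hLA hLmax j hj).symm

lemma eq_alphaHatK_of_saturated_update {β : ℕ → ℕ} {k : ℕ} (hLle : L ≤ ℓ)
    (hLA : psum α L ≤ m) (hLmax : L < ℓ → m < psum α (L + 1)) (hb : ∀ i < ℓ, β i ≤ α i)
    (hm : psum β ℓ ≤ m) (hkℓ : k < ℓ) (hk : β k + 1 = α k) (hkm : psum β (k + 1) < m)
    (h : Saturated m ℓ (update α k (β k)) β) :
    k < L ∧ ∀ i < ℓ, β i = alphaHatK m ℓ L α k i := by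
  have hα' : update α k (β k) = update α k (α k - 1) := by rw [← hk, Nat.add_sub_cancel]
  rw [hα'] at h
  have hb' : ∀ i < ℓ, β i ≤ update α k (α k - 1) i := by
    intro i hi
    rcases eq_or_ne i k with rfl | hik
    · rw [update_self]; omega
    · rw [update_of_ne hik]; exact hb i hi
  have hpsum_k := h.psum_eq_min hb' hm (k + 1) hkℓ
  have := psum_update_add_of_lt (f := α) (α k - 1) k.lt_add_one
  have hkL : k < L := by
    by_contra hLk
    have := hLmax (by omega)
    have := psum_mono α (show L + 1 ≤ k + 1 by omega)
    omega
  obtain ⟨hLA', hLmax'⟩ := psum_update_pred_cutoff hkL (by omega) hLA hLmax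
  refine ⟨hkL, fun i hi => ?_⟩
  rw [alphaHatK_eq_alphaHat hkL (by omega) hLA]
  exact eq_alphaHat_of_saturated hLle hLA' hLmax' hb' hm h i hi

end Exponent

theorem statement1_general (q m ℓ : ℕ) (hq : IsPrimePow q) (α : ℕ → ℕ)
    (hpos : ∀ i < ℓ, 0 < α i)
    (L : ℕ) (hLle : L ≤ ℓ) (hLA : psum α L ≤ m)
    (hLmax : L < ℓ → m < psum α (L + 1)) :
    (∀ β : ℕ → ℕ, (∀ i < ℓ, β i ≤ α i) → psum β ℓ ≤ m →
      (eexp q m ℓ α β < q ^ m ↔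
        ((∀ i < ℓ, β i = alphaHat m ℓ L α i) ∨
          ∃ k < L, ∀ i < ℓ, β i = alphaHatK m ℓ L α k i))) ∧
    eexp q m ℓ α (alphaHat m ℓ L α) = 0 ∧
    (∀ k < L, eexp q m ℓ α (alphaHatK m ℓ L α k) = q ^ m - q ^ (psum α (k + 1) - 1)) := by
  have hq_pos : 0 < q := hq.pos
  have hLmax' : L < ℓ → m ≤ psum α (L + 1) := fun h => (hLmax h).le
  have hHatK : ∀ k < L, eexp q m ℓ α (alphaHatK m ℓ L α k) = q ^ m - q ^ (psum α (k + 1) - 1) :=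
    fun k hk => eexp_alphaHatK (hpos k (by omega)) hLle hLA hLmax hk
  refine ⟨fun β hb hm => ⟨fun he => ?_, ?_⟩, eexp_alphaHat hLle hLA hLmax', hHatK⟩
  · rcases saturated_or_of_eexp_lt hq.two_le hm he with hsat | ⟨k, hkℓ, hk, hkm, hsat⟩
    · exact Or.inl (eq_alphaHat_of_saturated hLle hLA hLmax' hb hm hsat)
    · obtain ⟨hkL, hβ⟩ :=
        eq_alphaHatK_of_saturated_update hLle hLA hLmax hb hm hkℓ hk hkm hsat
      exact Or.inr ⟨k, hkL, hβ⟩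
  · rintro (h | ⟨k, hk, h⟩)
    · rw [eexp_congr h, eexp_alphaHat hLle hLA hLmax']
      positivity
    · rw [eexp_congr h, hHatK k hk]
      exact Nat.sub_lt (by positivity) (by positivity)

/-- Lemma (vanishing t-power lemma): for a prime power `q`, `m ≥ 0`, a composition
`α = (α_0,…,α_{ℓ-1})` of `n`, and `L` the largest index with `A_L ≤ m`, the weak
compositions `β ≤ α` with `|β| ≤ m` and `e(m,α,β) < q^m` are exactly `α̂` and the
`α̂⁽ᵏ⁾` for `0 ≤ k < L`; moreover `e(m,α,α̂) = 0` and `e(m,α,α̂⁽ᵏ⁾) = q^m − q^{A_{k+1} − 1}`. -/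
theorem statement1 (q m ℓ n : ℕ) (hq : IsPrimePow q) (α : ℕ → ℕ)
    (hpos : ∀ i < ℓ, 0 < α i) (hsum : ∑ i ∈ Finset.range ℓ, α i = n)
    (L : ℕ) (hLle : L ≤ ℓ) (hLA : psum α L ≤ m)
    (hLmax : L < ℓ → m < psum α (L + 1)) :
    (∀ β : ℕ → ℕ, (∀ i < ℓ, β i ≤ α i) → psum β ℓ ≤ m →
      (eexp q m ℓ α β < q ^ m ↔
        ((∀ i < ℓ, β i = alphaHat m ℓ L α i) ∨
          ∃ k < L, ∀ i < ℓ, β i = alphaHatK m ℓ L α k i))) ∧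
    eexp q m ℓ α (alphaHat m ℓ L α) = 0 ∧
    (∀ k < L, eexp q m ℓ α (alphaHatK m ℓ L α k) = q ^ m - q ^ (psum α (k + 1) - 1)) :=
  statement1_general q m ℓ hq α hpos L hLle hLA hLmax
end

section
/- The image of the monomial (x_1 x_2 ⋯ x_n)^{q^m−1} in Q = S/(x_1^{q^m},…,x_n^{q^m}) is fixed by every element of GL_n(F_q); equivalently, for every g ∈ GL_n(F_q), the polynomial g((x_1⋯x_n)^{q^m−1}) − (x_1⋯x_n)^{q^m−1} lies in the ideal (x_1^{q^m},…,x_n^{q^m}) of F_q[x_1,…,x_n]. -/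
open Matrix MvPolynomial

/-!
Write `Q = q^m`, `I = (x_1^Q, …, x_n^Q)` and `e = (x_1 ⋯ x_n)^(Q-1)`. Since `Q` is a power of the
characteristic, `f ↦ f^Q` is additive, so a substitution sends `x_i^Q` to `∑_j g_ij^Q x_j^Q ∈ I`:
every matrix preserves `I`, and hence the matrices fixing `e` modulo `I` form a submonoid. Every
matrix is a product of transvections and a diagonal matrix. A diagonal matrix `diag d` multiplies
`e` by `(∏ d_k)^(Q-1)`, which is `1` when `det = ∏ d_k ≠ 0`. The transvection `x_i ↦ x_i + c x_j`
changes `e` by `((x_i + c x_j)^(Q-1) - x_i^(Q-1)) ⋅ ∏_{k ≠ i} x_k^(Q-1)`, whose first factor is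
divisible by `x_j` and second by `x_j^(Q-1)`, so the change lies in `(x_j^Q) ⊆ I`.
-/

noncomputable def lsub {n : ℕ} {Fq : Type} [Field Fq] (g : Matrix (Fin n) (Fin n) Fq) :
    MvPolynomial (Fin n) Fq →ₐ[Fq] MvPolynomial (Fin n) Fq :=
  MvPolynomial.aeval fun i => ∑ j, MvPolynomial.C (g i j) * MvPolynomial.X j

noncomputable def varPowIdeal (σ R : Type*) [CommSemiring R] (Q : ℕ) : Ideal (MvPolynomial σ R) :=
  Ideal.span (Set.range fun i => X i ^ Q)

lemma X_pow_mem_varPowIdeal {σ R : Type*} [CommSemiring R] (Q : ℕ) (i : σ) :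
    (X i : MvPolynomial σ R) ^ Q ∈ varPowIdeal σ R Q :=
  Ideal.subset_span ⟨i, rfl⟩

noncomputable def socleMonomial (n : ℕ) (R : Type*) [CommSemiring R] (Q : ℕ) :
    MvPolynomial (Fin n) R :=
  (∏ i, X i) ^ (Q - 1)

section Field

variable {n : ℕ} {K : Type} [Field K]

lemma lsub_X (M : Matrix (Fin n) (Fin n) K) (k : Fin n) :
    lsub M (X k) = ∑ j, C (M k j) * X j := by
  simp [lsub]

lemma lsub_mul (M N : Matrix (Fin n) (Fin n) K) : lsub (M * N) = (lsub N).comp (lsub M) := by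
  refine MvPolynomial.algHom_ext fun i => ?_
  simp only [AlgHom.comp_apply, lsub_X, map_sum, _root_.map_mul, algHom_C, algebraMap_eq,
    Matrix.mul_apply, map_sum C, Finset.sum_mul, Finset.mul_sum, mul_assoc]
  exact Finset.sum_comm

lemma lsub_one : lsub (1 : Matrix (Fin n) (Fin n) K) = AlgHom.id K _ :=
  MvPolynomial.algHom_ext fun i => by simp [lsub_X, Matrix.one_apply]

lemma lsub_diagonal_X (d : Fin n → K) (k : Fin n) : lsub (diagonal d) (X k) = C (d k) * X k := by
  simp [lsub_X, diagonal_apply, apply_ite C, ite_mul]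

lemma lsub_transvection_X_self (i j : Fin n) (c : K) :
    lsub (transvection i j c) (X i) = X i + C c * X j := by
  simp [lsub_X, transvection, Matrix.one_apply, Matrix.single, add_mul, Finset.sum_add_distrib,
    apply_ite C, ite_mul]

lemma lsub_transvection_X_of_ne {i k : Fin n} (hk : k ≠ i) (j : Fin n) (c : K) :
    lsub (transvection i j c) (X k) = X k := by
  simp [lsub_X, transvection, Matrix.one_apply, Matrix.single, ite_mul, Ne.symm hk]

lemma lsub_diagonal_socleMonomial (d : Fin n → K) (Q : ℕ) :
    lsub (diagonal d) (socleMonomial n K Q) = C ((∏ k, d k) ^ (Q - 1)) * socleMonomial n K Q := by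
  rw [socleMonomial, map_pow, map_prod, C_pow, ← mul_pow, map_prod C, ← Finset.prod_mul_distrib]
  simp only [lsub_diagonal_X]

lemma lsub_transvection_socleMonomial_sub_mem {Q : ℕ} (hQ : 0 < Q) {i j : Fin n} (hij : i ≠ j)
    (c : K) :
    lsub (transvection i j c) (socleMonomial n K Q) - socleMonomial n K Q ∈ varPowIdeal _ K Q := by
  set R : MvPolynomial (Fin n) K := ∏ k ∈ {i}ᶜ, X k
  have hR : lsub (transvection i j c) R = R :=
    (map_prod _ _ _).trans <| Finset.prod_congr rfl fun k hk =>
      lsub_transvection_X_of_ne (by simpa using hk) j c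
  have hdiff : lsub (transvection i j c) (socleMonomial n K Q) - socleMonomial n K Q =
      ((X i + C c * X j) ^ (Q - 1) - X i ^ (Q - 1)) * R ^ (Q - 1) := by
    rw [socleMonomial, Fintype.prod_eq_mul_prod_compl i, map_pow, _root_.map_mul,
      lsub_transvection_X_self, hR, mul_pow, mul_pow, sub_mul]
  have hleft : (X j : MvPolynomial (Fin n) K) ∣ (X i + C c * X j) ^ (Q - 1) - X i ^ (Q - 1) := by
    have h := sub_dvd_pow_sub_pow (X i + C c * X j) (X i) (Q - 1)
    rw [add_sub_cancel_left] at h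
    exact (dvd_mul_left (X j) (C c)).trans h
  have hright : (X j : MvPolynomial (Fin n) K) ^ (Q - 1) ∣ R ^ (Q - 1) :=
    pow_dvd_pow_of_dvd (Finset.dvd_prod_of_mem _ (by simpa using hij.symm)) _
  refine Ideal.mem_of_dvd _ ?_ (X_pow_mem_varPowIdeal Q j)
  rw [hdiff, ← Nat.sub_add_cancel hQ, pow_succ']
  simpa using mul_dvd_mul hleft hright

end Field

section FiniteField

variable {K : Type} [Field K] [Fintype K] {n : ℕ}

lemma pow_card_pow_sub_one {a : K} (ha : a ≠ 0) (m : ℕ) : a ^ (Fintype.card K ^ m - 1) = 1 := by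
  obtain ⟨k, hk⟩ := Nat.sub_dvd_pow_sub_pow (Fintype.card K) 1 m
  rw [one_pow] at hk
  rw [hk, pow_mul, FiniteField.pow_card_sub_one_eq_one a ha, one_pow]

lemma lsub_mem_varPowIdeal (M : Matrix (Fin n) (Fin n) K) (m : ℕ) {f : MvPolynomial (Fin n) K}
    (hf : f ∈ varPowIdeal _ K (Fintype.card K ^ m)) :
    lsub M f ∈ varPowIdeal _ K (Fintype.card K ^ m) := by
  suffices varPowIdeal _ K (Fintype.card K ^ m) ≤
      (varPowIdeal _ K (Fintype.card K ^ m)).comap (lsub M) from this hf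
  refine Ideal.span_le.mpr ?_
  rintro _ ⟨i, rfl⟩
  have hfrob : ∀ x : MvPolynomial (Fin n) K,
      x ^ Fintype.card K ^ m = (FiniteField.frobeniusAlgHom K _ ^ m) x := by
    simp [AlgHom.coe_pow, FiniteField.coe_frobeniusAlgHom]
  rw [SetLike.mem_coe, Ideal.mem_comap, map_pow, lsub_X, hfrob, map_sum]
  simp only [← hfrob, mul_pow]
  exact Ideal.sum_mem _ fun j _ => Ideal.mul_mem_left _ _ (X_pow_mem_varPowIdeal _ j)

variable (K n) in
def socleStabilizer (m : ℕ) : Submonoid (Matrix (Fin n) (Fin n) K) where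
  carrier := {M | lsub M (socleMonomial n K (Fintype.card K ^ m)) -
    socleMonomial n K (Fintype.card K ^ m) ∈ varPowIdeal _ K (Fintype.card K ^ m)}
  one_mem' := by simp [lsub_one]
  mul_mem' {A B} hA hB := by
    set e := socleMonomial n K (Fintype.card K ^ m)
    have hsplit : lsub (A * B) e - e = lsub B (lsub A e - e) + (lsub B e - e) := by
      rw [lsub_mul, AlgHom.comp_apply, map_sub]; abel
    rw [Set.mem_ofPred_eq, hsplit]
    exact add_mem (lsub_mem_varPowIdeal B m hA) hB

lemma list_prod_transvection_mem_socleStabilizer (m : ℕ) (L : List (TransvectionStruct (Fin n) K)) :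
    (L.map TransvectionStruct.toMatrix).prod ∈ socleStabilizer K n m := by
  refine Submonoid.list_prod_mem _ ?_
  simp only [List.mem_map]
  rintro _ ⟨t, -, rfl⟩
  exact lsub_transvection_socleMonomial_sub_mem (Nat.pos_of_ne_zero (pow_ne_zero _
    Fintype.card_ne_zero)) t.hij t.c

lemma diagonal_mem_socleStabilizer (m : ℕ) {d : Fin n → K} (hd : ∏ k, d k ≠ 0) :
    diagonal d ∈ socleStabilizer K n m := by
  simp [socleStabilizer, lsub_diagonal_socleMonomial, pow_card_pow_sub_one hd]

end FiniteField

/-- Proposition: for every `g ∈ GL_n(F_q)`, the polynomial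
`g((x_1⋯x_n)^{q^m−1}) − (x_1⋯x_n)^{q^m−1}` lies in the ideal `(x_1^{q^m},…,x_n^{q^m})`;
i.e. the image of `(x_1⋯x_n)^{q^m−1}` in `Q = S/𝔪^{[q^m]}` is `GL_n(F_q)`-invariant. -/
theorem statement2 (q m n : ℕ) (Fq : Type) [Field Fq] [Fintype Fq]
    (hcard : Fintype.card Fq = q) (g : GL (Fin n) Fq) :
    lsub (g : Matrix (Fin n) (Fin n) Fq) ((∏ i : Fin n, MvPolynomial.X i) ^ (q ^ m - 1)) -
        (∏ i : Fin n, MvPolynomial.X i) ^ (q ^ m - 1)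
      ∈ Ideal.span
          (Set.range fun i : Fin n =>
            (MvPolynomial.X i : MvPolynomial (Fin n) Fq) ^ q ^ m) := by
  subst hcard
  obtain ⟨L, L', D, hg⟩ :=
    Pivot.exists_list_transvec_mul_diagonal_mul_list_transvec (g : Matrix (Fin n) (Fin n) Fq)
  have hD : ∏ k, D k ≠ 0 := by
    have hdet : (g : Matrix (Fin n) (Fin n) Fq).det = ∏ k, D k := by
      rw [hg, det_mul, det_mul, TransvectionStruct.det_toMatrix_prod,
        TransvectionStruct.det_toMatrix_prod, det_diagonal, one_mul, mul_one]
    exact hdet ▸ ((isUnit_iff_isUnit_det _).mp g.isUnit).ne_zero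
  have hmem : (g : Matrix (Fin n) (Fin n) Fq) ∈ socleStabilizer Fq n m := by
    rw [hg]
    exact mul_mem (mul_mem (list_prod_transvection_mem_socleStabilizer m L)
      (diagonal_mem_socleStabilizer m hD)) (list_prod_transvection_mem_socleStabilizer m L')
  exact hmem
end

section
/- Let S be an integral domain and G a finite group of ring automorphisms of S, with invariant subring R := S^G and K := Frac(R) the fraction field of R. Let N be the additive subgroup of S generated by {g(s) − s : g ∈ G, s ∈ S}; then N is an R-submodule of S, and the cofixed space S_G := S/N satisfies dim_K (K ⊗_R S_G) = 1; that is, S_G has rank one as an R-module. -/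
/-!
The averaging map `Tr s = ∑_{g ∈ G} g s` is an `R`-linear map `S → R = S^G` killing every
`g s - s`, so it factors through `S_G`. Reindexing `g ↦ g⁻¹` gives
`Tr(s) t - Tr(t) s = ∑_g (g (s · g⁻¹ t) - s · g⁻¹ t)`,
hence `Tr(s₀) [t] = Tr(t) [s₀]` in `S_G`.
By Dedekind's independence of characters some `s₀` has `Tr s₀ ≠ 0`; then `1 ⊗ [s₀]` spans
`K ⊗_R S_G`, and it is nonzero since the `K`-linear extension of `Tr` sends it to `Tr s₀`.
-/

/-- The subring of `G`-fixed elements of `S`, for `G` a group of ring automorphisms of `S`. -/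
def fixedSubring (S : Type*) [CommRing S] (G : Subgroup (RingAut S)) : Subring S where
  carrier := {s | ∀ g ∈ G, g s = s}
  zero_mem' := fun g _ => map_zero g
  one_mem' := fun g _ => map_one g
  add_mem' := by
    intro a b ha hb g hg
    rw [map_add, ha g hg, hb g hg]
  mul_mem' := by
    intro a b ha hb g hg
    rw [map_mul, ha g hg, hb g hg]
  neg_mem' := by
    intro a ha g hg
    rw [map_neg, ha g hg]

open TensorProduct

theorem rank_tensorProduct_eq_one_of_smul_eq {R K M : Type*} [CommRing R] [Field K]
    [Algebra R K] [AddCommGroup M] [Module R M] (f : M →ₗ[R] R) (m₀ : M)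
    (hm₀ : algebraMap R K (f m₀) ≠ 0) (hsmul : ∀ m, f m₀ • m = f m • m₀) :
    Module.rank K (K ⊗[R] M) = 1 := by
  set u := algebraMap R K (f m₀)
  let φ : K ⊗[R] M →ₗ[K] K := ((Algebra.linearMap R K) ∘ₗ f).liftBaseChange K
  have hφ : φ ((1 : K) ⊗ₜ m₀) = u := by simp [φ, u]
  have hne : (1 : K) ⊗ₜ[R] m₀ ≠ 0 := fun h => hm₀ (by rw [← hφ, h, map_zero])
  refine rank_eq_one _ hne fun v => ?_
  induction v with
  | zero => exact ⟨0, zero_smul _ _⟩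
  | tmul k m =>
    refine ⟨u⁻¹ * (algebraMap R K (f m) * k), ?_⟩
    have hu : u • (k ⊗ₜ[R] m) = (algebraMap R K (f m) * k) • ((1 : K) ⊗ₜ[R] m₀) := by
      rw [algebraMap_smul, ← tmul_smul, hsmul, ← smul_tmul, smul_tmul', smul_eq_mul, mul_one,
        Algebra.smul_def]
    rw [mul_smul, ← hu, ← mul_smul, inv_mul_cancel₀ hm₀, one_smul]
  | add x y hx hy =>
    obtain ⟨a, rfl⟩ := hx
    obtain ⟨b, rfl⟩ := hy
    exact ⟨a + b, add_smul _ _ _⟩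

def coinvariantGenerators {S : Type*} [CommRing S] (G : Subgroup (RingAut S)) : Set S :=
  {x : S | ∃ g ∈ G, ∃ s : S, x = g s - s}

section

variable {S : Type*} [CommRing S] {G : Subgroup (RingAut S)}

theorem mul_mem_coinvariantGenerators {r x : S} (hr : r ∈ fixedSubring S G)
    (hx : x ∈ coinvariantGenerators G) : r * x ∈ coinvariantGenerators G := by
  obtain ⟨g, hg, s, rfl⟩ := hx
  exact ⟨g, hg, r * s, by rw [map_mul, hr g hg, mul_sub]⟩

theorem mul_mem_closure_coinvariantGenerators {r x : S} (hr : r ∈ fixedSubring S G)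
    (hx : x ∈ AddSubgroup.closure (coinvariantGenerators G)) :
    r * x ∈ AddSubgroup.closure (coinvariantGenerators G) :=
  (AddSubgroup.closure_le
      (K := (AddSubgroup.closure (coinvariantGenerators G)).comap (AddMonoidHom.mulLeft r))).2
    (fun _ hy => AddSubgroup.subset_closure (mul_mem_coinvariantGenerators hr hy)) hx

variable (G) [Fintype G]

def groupTrace : S →ₗ[fixedSubring S G] fixedSubring S G where
  toFun s := ⟨∑ g : G, (g : RingAut S) s, fun h hh => by
    rw [map_sum]
    exact Fintype.sum_equiv (Equiv.mulLeft ⟨h, hh⟩) _ _ fun _ => rfl⟩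
  map_add' s t := Subtype.ext <| by simp [Finset.sum_add_distrib]
  map_smul' r s := Subtype.ext <| by
    simp [Subring.smul_def, Finset.mul_sum, fun g : G => r.2 g g.2]

variable {G}

@[simp]
theorem coe_groupTrace (s : S) : (groupTrace G s : S) = ∑ g : G, (g : RingAut S) s := rfl

theorem groupTrace_map {g : RingAut S} (hg : g ∈ G) (s : S) :
    groupTrace G (g s) = groupTrace G s :=
  Subtype.ext <| Fintype.sum_equiv (Equiv.mulRight ⟨g, hg⟩) _ _ fun _ => rfl

theorem span_coinvariantGenerators_le_ker_groupTrace :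
    Submodule.span (fixedSubring S G) (coinvariantGenerators G) ≤
      LinearMap.ker (groupTrace G) := by
  rw [Submodule.span_le]
  rintro _ ⟨g, hg, s, rfl⟩
  simp [groupTrace_map hg]

theorem groupTrace_smul_sub_groupTrace_smul_mem_span (s t : S) :
    groupTrace G s • t - groupTrace G t • s ∈
      Submodule.span (fixedSubring S G) (coinvariantGenerators G) := by
  have h : groupTrace G s • t - groupTrace G t • s =
      ∑ g : G, ((g : RingAut S) (s * ((g⁻¹ : G) : RingAut S) t) -
        s * ((g⁻¹ : G) : RingAut S) t) := by
    have hinv : ∑ g : G, ((g⁻¹ : G) : RingAut S) t = ∑ g : G, (g : RingAut S) t :=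
      Equiv.sum_comp (Equiv.inv G) fun g : G => (g : RingAut S) t
    rw [Finset.sum_sub_distrib, ← Finset.mul_sum, hinv]
    simp only [coe_groupTrace, Subring.smul_def, smul_eq_mul, map_mul, InvMemClass.coe_inv,
      RingAut.inv_apply, RingEquiv.apply_symm_apply]
    simp only [Finset.sum_mul, mul_comm s]
  rw [h]
  exact Submodule.sum_mem _ fun g _ => Submodule.subset_span ⟨g, g.2, _, rfl⟩

theorem exists_groupTrace_ne_zero [IsDomain S] : ∃ s : S, groupTrace G s ≠ 0 := by
  by_contra! h
  have hinj : Function.Injective fun g : G => ((g : RingAut S) : S →* S) :=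
    fun g₁ g₂ h => Subtype.ext <| RingEquiv.ext fun s => DFunLike.congr_fun h s
  have hsum : ∑ g : G, (1 : S) • (((g : RingAut S) : S →* S) : S → S) = 0 := by
    funext s
    simpa [Finset.sum_apply] using congrArg Subtype.val (h s)
  exact one_ne_zero <| Fintype.linearIndependent_iff.mp
    ((linearIndependent_monoidHom S S).comp _ hinj) (fun _ => 1) hsum 1

theorem rank_tensorProduct_cofixed_eq_one [IsDomain S] :
    Module.rank (FractionRing (fixedSubring S G))
      (FractionRing (fixedSubring S G) ⊗[fixedSubring S G]
        (S ⧸ Submodule.span (fixedSubring S G) (coinvariantGenerators G))) = 1 := by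
  obtain ⟨s₀, hs₀⟩ := exists_groupTrace_ne_zero (G := G)
  let N := Submodule.span (fixedSubring S G) (coinvariantGenerators G)
  let τ := N.liftQ (groupTrace G) span_coinvariantGenerators_le_ker_groupTrace
  refine rank_tensorProduct_eq_one_of_smul_eq τ (N.mkQ s₀) ?_ fun m => ?_
  · rwa [Submodule.mkQ_apply, Submodule.liftQ_apply, ne_eq, IsFractionRing.to_map_eq_zero_iff]
  · obtain ⟨s, rfl⟩ := N.mkQ_surjective m
    rw [Submodule.mkQ_apply, Submodule.mkQ_apply, Submodule.liftQ_apply, Submodule.liftQ_apply,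
      ← Submodule.Quotient.mk_smul, ← Submodule.Quotient.mk_smul, Submodule.Quotient.eq]
    exact groupTrace_smul_sub_groupTrace_smul_mem_span s₀ s

end

/-- Let `S` be an integral domain and `G` a finite group of ring automorphisms of `S`, with
invariant subring `R = S^G` and `K = Frac(R)`.  Then the additive subgroup `N` generated by
`{g(s) − s : g ∈ G, s ∈ S}` is an `R`-submodule of `S`, and the cofixed space `S_G = S/N`
satisfies `dim_K (K ⊗_R S_G) = 1`, i.e. it has rank one as an `R`-module. -/
theorem statement8 (S : Type*) [CommRing S] [IsDomain S]
    (G : Subgroup (RingAut S)) [Finite G] :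
    (∀ r : S, (∀ g ∈ G, g r = r) →
      ∀ x ∈ AddSubgroup.closure {x : S | ∃ g ∈ G, ∃ s : S, x = g s - s},
        r * x ∈ AddSubgroup.closure {x : S | ∃ g ∈ G, ∃ s : S, x = g s - s}) ∧
    Module.rank (FractionRing (fixedSubring S G))
        (TensorProduct (fixedSubring S G) (FractionRing (fixedSubring S G))
          (S ⧸ Submodule.span (fixedSubring S G) {x : S | ∃ g ∈ G, ∃ s : S, x = g s - s}))
      = 1 := by
  have := Fintype.ofFinite G
  exact ⟨fun r hr x hx => mul_mem_closure_coinvariantGenerators hr hx,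
    rank_tensorProduct_cofixed_eq_one⟩
end

section
/- Let q be a prime power and m, n ≥ 1, with GL_n(F_q) acting on F_{q^m}^n via the inclusion GL_n(F_q) ⊆ GL_n(F_{q^m}). The map v ↦ span_{F_q}{v_1,…,v_n} induces a bijection from the set of GL_n(F_q)-orbits on F_{q^m}^n onto the set of F_q-subspaces of F_{q^m} of F_q-dimension at most min(n,m). Consequently, the number of GL_n(F_q)-orbits on F_{q^m}^n equals Σ_{k=0}^{min(n,m)} [m choose k]_q, where [m choose k]_q = ∏_{i=0}^{k−1}(q^m−q^i)/(q^k−q^i) is the number of k-dimensional F_q-subspaces of an m-dimensional F_q-vector space. -/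
/-!
Encode `v ∈ F_{q^m}^n` as the `F_q`-linear map `F_q^n → F_{q^m}`, `c ↦ Σ c_s v_s`, whose range
is the span of the `v_s`. Acting by `g` precomposes this map with the automorphism given by the
rows of `g`, and two linear maps out of a finite-dimensional space have the same range exactly
when they differ by such an automorphism (decompose the source as range × kernel). So the orbits
are the fibres of `v ↦ span v`, whose image consists of the subspaces of dimension at most
`min(n, m)`. Counting `k`-dimensional subspaces by their ordered bases gives the Gaussian
binomial coefficients.
-/

open Finset Matrix

/-- The action of `g ∈ GL_n(F_q)` on `F_{q^m}^n`: `(g·v)_r = Σ_s g_{rs} v_s`. -/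
noncomputable def actGL (Fq Fqm : Type) [Field Fq] [Field Fqm] [Algebra Fq Fqm] {n : ℕ}
    (g : GL (Fin n) Fq) (v : Fin n → Fqm) : Fin n → Fqm :=
  fun r => ∑ s, algebraMap Fq Fqm ((g : Matrix (Fin n) (Fin n) Fq) r s) * v s

namespace LinearMap

variable {K V W : Type*} [DivisionRing K] [AddCommGroup V] [Module K V] [AddCommGroup W]
  [Module K W]

theorem exists_linearEquiv_range_prod_ker (f : V →ₗ[K] W) :
    ∃ e : V ≃ₗ[K] range f × ker f, ∀ x, ((e x).1 : W) = f x := by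
  obtain ⟨C, hC⟩ := (ker f).exists_isCompl
  refine ⟨equivProdOfSurjectiveOfIsCompl f.rangeRestrict ((ker f).projectionOnto C hC)
    f.range_rangeRestrict (Submodule.range_projectionOnto _) ?_, fun _ => rfl⟩
  rwa [ker_rangeRestrict, Submodule.ker_projectionOnto]

theorem exists_linearEquiv_comp_eq_of_range_eq [FiniteDimensional K V] {f g : V →ₗ[K] W}
    (h : range f = range g) : ∃ e : V ≃ₗ[K] V, ∀ x, f (e x) = g x := by
  obtain ⟨ef, hef⟩ := f.exists_linearEquiv_range_prod_ker
  obtain ⟨eg, heg⟩ := g.exists_linearEquiv_range_prod_ker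
  have hker : Module.finrank K (ker g) = Module.finrank K (ker f) := by
    have hf := f.finrank_range_add_finrank_ker
    have hg := g.finrank_range_add_finrank_ker
    rw [h] at hf
    omega
  refine ⟨eg.trans (((LinearEquiv.ofEq _ _ h.symm).prodCongr
    (LinearEquiv.ofFinrankEq _ _ hker)).trans ef.symm), fun x => ?_⟩
  simp only [← hef, LinearEquiv.trans_apply, LinearEquiv.apply_symm_apply, ← heg]
  rfl

end LinearMap

section Action

variable {K L : Type} [Field K] [Field L] [Algebra K L] {n : ℕ}

theorem actGL_apply (g : GL (Fin n) K) (v : Fin n → L) (r : Fin n) :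
    actGL K L g v r = Fintype.linearCombination K v ((g : Matrix (Fin n) (Fin n) K) r) := by
  simp only [actGL, Fintype.linearCombination_apply, Algebra.smul_def]

theorem actGL_mul (g h : GL (Fin n) K) (v : Fin n → L) :
    actGL K L (g * h) v = actGL K L g (actGL K L h v) := by
  funext r
  simp only [actGL, Units.val_mul, Matrix.mul_apply, map_sum, _root_.map_mul, Finset.sum_mul,
    Finset.mul_sum, mul_assoc]
  exact Finset.sum_comm

theorem actGL_one (v : Fin n → L) : actGL K L (1 : GL (Fin n) K) v = v := by
  funext r
  simp [actGL, Matrix.one_apply, apply_ite]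

theorem span_range_actGL_le (g : GL (Fin n) K) (v : Fin n → L) :
    Submodule.span K (Set.range (actGL K L g v)) ≤ Submodule.span K (Set.range v) := by
  rw [Submodule.span_le]
  rintro _ ⟨r, rfl⟩
  rw [actGL_apply, ← Fintype.range_linearCombination]
  exact LinearMap.mem_range_self _ _

theorem span_range_actGL (g : GL (Fin n) K) (v : Fin n → L) :
    Submodule.span K (Set.range (actGL K L g v)) = Submodule.span K (Set.range v) := by
  refine le_antisymm (span_range_actGL_le g v) ?_
  simpa only [← actGL_mul, inv_mul_cancel, actGL_one] using
    span_range_actGL_le g⁻¹ (actGL K L g v)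

theorem exists_actGL_eq_of_span_eq {v v' : Fin n → L}
    (h : Submodule.span K (Set.range v) = Submodule.span K (Set.range v')) :
    ∃ g : GL (Fin n) K, actGL K L g v = v' := by
  classical
  obtain ⟨e, he⟩ := LinearMap.exists_linearEquiv_comp_eq_of_range_eq
    (f := Fintype.linearCombination K v) (g := Fintype.linearCombination K v')
    (by simp only [Fintype.range_linearCombination, h])
  have hdet : IsUnit (LinearMap.toMatrix' (e : (Fin n → K) →ₗ[K] Fin n → K))ᵀ.det := by
    rw [det_transpose, LinearMap.det_toMatrix']
    exact e.isUnit_det'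
  refine ⟨GeneralLinearGroup.mk'' _ hdet, funext fun r => ?_⟩
  have hrow :
      (GeneralLinearGroup.mk'' _ hdet : Matrix (Fin n) (Fin n) K) r = e (Pi.single r 1) := by
    funext s
    simp [GeneralLinearGroup.mk'', Matrix.nonsingInvUnit, LinearMap.toMatrix'_apply]
  rw [actGL_apply, hrow, he, Fintype.linearCombination_apply_single, one_smul]

theorem exists_actGL_eq_iff_span_eq (v v' : Fin n → L) :
    (∃ g : GL (Fin n) K, actGL K L g v = v') ↔
      Submodule.span K (Set.range v) = Submodule.span K (Set.range v') := by
  refine ⟨?_, exists_actGL_eq_of_span_eq⟩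
  rintro ⟨g, rfl⟩
  exact (span_range_actGL g v).symm

end Action

section Span

variable {K V : Type*} [DivisionRing K] [AddCommGroup V] [Module K V]

theorem finrank_span_range_le_min [FiniteDimensional K V] {n : ℕ} (v : Fin n → V) :
    Module.finrank K (Submodule.span K (Set.range v)) ≤ min n (Module.finrank K V) :=
  le_min ((finrank_range_le_card v).trans_eq (Fintype.card_fin n)) (Submodule.finrank_le _)

theorem Submodule.exists_fin_span_range_eq (W : Submodule K V) [FiniteDimensional K W] {n : ℕ}
    (hW : Module.finrank K W ≤ n) : ∃ v : Fin n → V, span K (Set.range v) = W := by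
  classical
  let b := Module.finBasis K W
  refine ⟨fun i => if h : (i : ℕ) < Module.finrank K W then b ⟨i, h⟩ else 0, le_antisymm ?_ ?_⟩
  · rw [span_le]
    rintro _ ⟨i, rfl⟩
    dsimp only
    split
    · exact (b _).2
    · exact W.zero_mem
  · intro x hx
    obtain ⟨y, rfl⟩ : ∃ y : W, (y : V) = x := ⟨⟨x, hx⟩, rfl⟩
    rw [← b.sum_repr y]
    simp only [coe_sum, coe_smul]
    refine sum_mem fun j _ => smul_mem _ _ (subset_span ⟨⟨j, j.2.trans_le hW⟩, by simp⟩)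

end Span

theorem Nat.card_fibers_eq_card_range {X Y : Type*} (f : X → Y) :
    Nat.card {O : Set X // ∃ x, O = f ⁻¹' {f x}} = Nat.card (Set.range f) := by
  have hinj : Function.Injective fun y : Set.range f => f ⁻¹' {(y : Y)} := by
    rintro ⟨_, x, rfl⟩ ⟨_, x', rfl⟩ h
    have hx : f x = f x' := (Set.ext_iff.1 h x).1 rfl
    exact Subtype.ext hx
  rw [← Nat.card_range_of_injective hinj]
  refine Nat.card_congr (Equiv.subtypeEquivRight fun O => ?_)
  simp only [Set.mem_range, Subtype.exists, exists_prop, exists_exists_eq_and]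
  exact exists_congr fun _ => eq_comm

theorem Nat.card_le_eq_sum_card_eq {α : Type*} [Finite α] (f : α → ℕ) (t : ℕ) :
    Nat.card {a // f a ≤ t} = ∑ k ∈ Finset.range (t + 1), Nat.card {a // f a = k} := by
  classical
  have := Fintype.ofFinite α
  simp only [Nat.card_eq_fintype_card, Fintype.card_subtype]
  rw [Finset.card_eq_sum_card_fiberwise (f := f) (t := Finset.range (t + 1))]
  · refine Finset.sum_congr rfl fun k hk => ?_
    rw [Finset.filter_filter]
    congr 1
    refine Finset.filter_congr fun a _ => and_iff_right_of_imp ?_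
    rintro rfl
    exact Nat.lt_succ_iff.1 (Finset.mem_range.1 hk)
  · intro a ha
    simpa [Nat.lt_succ_iff] using ha

section Grassmannian

variable {K V : Type*} [DivisionRing K] [AddCommGroup V] [Module K V]

theorem Submodule.card_linearIndependent_span_eq [FiniteDimensional K V] (W : Submodule K V)
    {k : ℕ} (hW : Module.finrank K W = k) :
    Nat.card {v : Fin k → V // LinearIndependent K v ∧ span K (Set.range v) = W} =
      Nat.card {u : Fin k → W // LinearIndependent K u} := by
  refine Nat.card_congr
    { toFun := fun v =>
        ⟨fun i => ⟨v.1 i, v.2.2.le (subset_span ⟨i, rfl⟩)⟩, v.2.1.of_comp W.subtype⟩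
      invFun := fun u => ⟨W.subtype ∘ u.1, u.2.map' _ W.ker_subtype, ?_⟩
      left_inv := fun _ => rfl
      right_inv := fun _ => rfl }
  refine eq_of_le_of_finrank_eq (span_le.2 (Set.range_subset_iff.2 fun i => (u.1 i).2)) ?_
  rw [finrank_span_eq_card (u.2.map' _ W.ker_subtype), Fintype.card_fin, hW]

variable [Fintype K] [Finite V]

local notation "q" => Fintype.card K

theorem card_submodule_finrank_eq_mul {k : ℕ} (hk : k ≤ Module.finrank K V) :
    Nat.card {W : Submodule K V // Module.finrank K W = k} * ∏ i : Fin k, (q ^ k - q ^ i.val) =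
      ∏ i : Fin k, (q ^ Module.finrank K V - q ^ i.val) := by
  have := Fintype.ofFinite {W : Submodule K V // Module.finrank K W = k}
  let spanOf : {v : Fin k → V // LinearIndependent K v} →
      {W : Submodule K V // Module.finrank K W = k} := fun v =>
    ⟨Submodule.span K (Set.range v.1), by rw [finrank_span_eq_card v.2, Fintype.card_fin]⟩
  have hfiber : ∀ W, Nat.card {v // spanOf v = W} = ∏ i : Fin k, (q ^ k - q ^ i.val) := fun W =>
    calc Nat.card {v // spanOf v = W}
        = Nat.card {v : Fin k → V // LinearIndependent K v ∧ Submodule.span K (Set.range v) = W} :=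
          Nat.card_congr ((Equiv.subtypeEquivRight fun _ => Subtype.ext_iff).trans
            (Equiv.subtypeSubtypeEquivSubtypeInter (fun v : Fin k → V => LinearIndependent K v)
              fun v => Submodule.span K (Set.range v) = W.1))
      _ = Nat.card {u : Fin k → W.1 // LinearIndependent K u} :=
          W.1.card_linearIndependent_span_eq W.2
      _ = ∏ i : Fin k, (q ^ k - q ^ i.val) := by rw [card_linearIndependent W.2.ge, W.2]
  rw [← card_linearIndependent hk, ← Nat.card_congr (Equiv.sigmaFiberEquiv spanOf), Nat.card_sigma,
    Finset.sum_congr rfl fun W _ => hfiber W, Finset.sum_const, Finset.card_univ, smul_eq_mul,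
    Nat.card_eq_fintype_card]

theorem card_submodule_finrank_eq {k : ℕ} (hk : k ≤ Module.finrank K V) :
    (Nat.card {W : Submodule K V // Module.finrank K W = k} : ℚ) =
      ∏ i ∈ Finset.range k,
        (((q : ℚ) ^ Module.finrank K V - (q : ℚ) ^ i) / ((q : ℚ) ^ k - (q : ℚ) ^ i)) := by
  have hq : 1 < q := Fintype.one_lt_card
  have hcast : ∀ a, k ≤ a → ((∏ i : Fin k, (q ^ a - q ^ i.val) : ℕ) : ℚ) =
      ∏ i ∈ Finset.range k, ((q : ℚ) ^ a - (q : ℚ) ^ i) := fun a ha => by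
    rw [Nat.cast_prod, ← Fin.prod_univ_eq_prod_range]
    refine Finset.prod_congr rfl fun i _ => ?_
    rw [Nat.cast_sub (Nat.pow_le_pow_right hq.le (i.2.le.trans ha))]
    push_cast
    rfl
  have hden : ∏ i ∈ Finset.range k, ((q : ℚ) ^ k - (q : ℚ) ^ i) ≠ 0 :=
    Finset.prod_ne_zero_iff.2 fun i hi => sub_ne_zero.2 (pow_lt_pow_right₀
      (by exact_mod_cast hq) (Finset.mem_range.1 hi)).ne'
  rw [Finset.prod_div_distrib, eq_div_iff hden, ← hcast k le_rfl, ← hcast _ hk, ← Nat.cast_mul,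
    card_submodule_finrank_eq_mul hk]

end Grassmannian

theorem statement11_general (q m n : ℕ)
    (Fq Fqm : Type) [Field Fq] [Fintype Fq] [Field Fqm] [Fintype Fqm] [Algebra Fq Fqm]
    (hcardq : Fintype.card Fq = q) (hcardqm : Fintype.card Fqm = q ^ m) :
    (∀ v v' : Fin n → Fqm,
      (∃ g : GL (Fin n) Fq, actGL Fq Fqm g v = v') ↔
        Submodule.span Fq (Set.range v) = Submodule.span Fq (Set.range v')) ∧
    (∀ v : Fin n → Fqm,
      Module.finrank Fq (Submodule.span Fq (Set.range v)) ≤ min n m) ∧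
    (∀ W : Submodule Fq Fqm, Module.finrank Fq W ≤ min n m →
      ∃ v : Fin n → Fqm, Submodule.span Fq (Set.range v) = W) ∧
    ((Nat.card {O : Set (Fin n → Fqm) //
          ∃ v : Fin n → Fqm, O = {w | ∃ g : GL (Fin n) Fq, actGL Fq Fqm g v = w}} : ℚ)
      = ∑ k ∈ Finset.range (min n m + 1),
          ∏ i ∈ Finset.range k,
            (((q : ℚ) ^ m - (q : ℚ) ^ i) / ((q : ℚ) ^ k - (q : ℚ) ^ i))) := by
  have hfinrank : Module.finrank Fq Fqm = m := by
    have h := Module.card_eq_pow_finrank (K := Fq) (V := Fqm)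
    rw [hcardq, hcardqm] at h
    exact Nat.pow_right_injective (hcardq ▸ Fintype.one_lt_card) h.symm
  have hle : ∀ v : Fin n → Fqm, Module.finrank Fq (Submodule.span Fq (Set.range v)) ≤ min n m :=
    fun v => hfinrank ▸ finrank_span_range_le_min v
  have hspan : ∀ W : Submodule Fq Fqm, Module.finrank Fq W ≤ min n m →
      ∃ v : Fin n → Fqm, Submodule.span Fq (Set.range v) = W :=
    fun W hW => W.exists_fin_span_range_eq (hW.trans (min_le_left _ _))
  have hrange : Set.range (fun v : Fin n → Fqm => Submodule.span Fq (Set.range v)) =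
      {W : Submodule Fq Fqm | Module.finrank Fq W ≤ min n m} :=
    Set.ext fun W => ⟨by rintro ⟨v, rfl⟩; exact hle v, hspan W⟩
  have horbit : ∀ v : Fin n → Fqm, {w | ∃ g : GL (Fin n) Fq, actGL Fq Fqm g v = w} =
      (fun w => Submodule.span Fq (Set.range w)) ⁻¹' {Submodule.span Fq (Set.range v)} :=
    fun v => Set.ext fun w => (exists_actGL_eq_iff_span_eq v w).trans eq_comm
  refine ⟨exists_actGL_eq_iff_span_eq, hle, hspan, ?_⟩
  simp_rw [horbit]
  rw [Nat.card_fibers_eq_card_range, hrange, Set.coe_ofPred, Nat.card_le_eq_sum_card_eq,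
    Nat.cast_sum]
  refine Finset.sum_congr rfl fun k hk => ?_
  have hkm : k ≤ Module.finrank Fq Fqm :=
    hfinrank ▸ (Nat.lt_succ_iff.1 (Finset.mem_range.1 hk)).trans (min_le_right _ _)
  rw [card_submodule_finrank_eq hkm, hcardq, hfinrank]

/-- Theorem: the map `v ↦ span_{F_q}{v_1,…,v_n}` induces a bijection from the set of
`GL_n(F_q)`-orbits on `F_{q^m}^n` onto the set of `F_q`-subspaces of `F_{q^m}` of dimension
at most `min(n,m)`; consequently the number of orbits equals
`Σ_{k=0}^{min(n,m)} ∏_{i<k} (q^m−q^i)/(q^k−q^i)`. -/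
theorem statement11 (q m n : ℕ) (hq : IsPrimePow q) (hm : 1 ≤ m) (hn : 1 ≤ n)
    (Fq Fqm : Type) [Field Fq] [Fintype Fq] [Field Fqm] [Fintype Fqm] [Algebra Fq Fqm]
    (hcardq : Fintype.card Fq = q) (hcardqm : Fintype.card Fqm = q ^ m) :
    (∀ v v' : Fin n → Fqm,
      (∃ g : GL (Fin n) Fq, actGL Fq Fqm g v = v') ↔
        Submodule.span Fq (Set.range v) = Submodule.span Fq (Set.range v')) ∧
    (∀ v : Fin n → Fqm,
      Module.finrank Fq (Submodule.span Fq (Set.range v)) ≤ min n m) ∧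
    (∀ W : Submodule Fq Fqm, Module.finrank Fq W ≤ min n m →
      ∃ v : Fin n → Fqm, Submodule.span Fq (Set.range v) = W) ∧
    ((Nat.card {O : Set (Fin n → Fqm) //
          ∃ v : Fin n → Fqm, O = {w | ∃ g : GL (Fin n) Fq, actGL Fq Fqm g v = w}} : ℚ)
      = ∑ k ∈ Finset.range (min n m + 1),
          ∏ i ∈ Finset.range k,
            (((q : ℚ) ^ m - (q : ℚ) ^ i) / ((q : ℚ) ^ k - (q : ℚ) ^ i))) :=
  statement11_general q m n Fq Fqm hcardq hcardqm
end
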